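/- arXiv:1309.3656 — 6 statements merged into one kernel-verified Lean document; each statement's English description precedes it below -/
import Mathlib

section
/- Let X be a topological vector space over ℝ or ℂ, and let A, B ⊆ X with A + B ⊆ A (A is stronger than B) and B ∪ {0} containing a dense vector subspace of X. If A ∪ {0} contains a vector subspace of dimension α (an infinite cardinal) and X has an open basis 𝓑 for its topology with card(𝓑) ≤ α, then A ∪ {0} contains a dense vector subspace of X. If additionally A ∩ B = ∅, then A ∪ {0} contains a dense vector subspace D with dim(D) = α. -/
/-!
Fix a basis `(x_i)_{i ∈ ι}` of a subspace `M_A ⊆ A ∪ {0}` of dimension `α`, and inject the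
nonempty members `U` of the basis `𝓑` into `ι`, say `U ↦ i_U`. Density of `M_B ⊆ B ∪ {0}` gives
`m_U ∈ M_B` and `t_U ≠ 0` with `m_U + t_U x_{i_U} ∈ U`. The span `D` of these vectors, together
with the remaining `x_i`, meets every `U`, hence is dense. A nonzero element of `D` has the form
`a + b` with `0 ≠ a ∈ M_A` and `b ∈ M_B`, so it lies in `A + (B ∪ {0}) ⊆ A`. If `A ∩ B = ∅` then
`M_A ∩ M_B = 0`, which makes the spanning family linearly independent, so `dim D = #ι = α`.
-/

open Cardinal Pointwise Set Submodule Finsupp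
open scoped Topology

section Lineability

variable {R X ι : Type*} [Ring R] [AddCommGroup X] [Module R X] {A B : Set X}
  {MA MB : Submodule R X} {a m : ι → X}

theorem add_mem_of_add_subset (hAB : A + B ⊆ A) {x y : X} (hx : x ∈ A) (hy : y ∈ B ∪ {0}) :
    x + y ∈ A := by
  rcases hy with hy | rfl
  · exact hAB (add_mem_add hx hy)
  · rwa [add_zero]

theorem Finsupp.linearCombination_add_family (a m : ι → X) (c : ι →₀ R) :
    linearCombination R (a + m) c = linearCombination R a c + linearCombination R m c := by
  simp only [linearCombination_apply, Pi.add_apply, smul_add, sum_add]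

theorem Finsupp.linearCombination_mem_submodule (c : ι →₀ R) (ha : ∀ i, a i ∈ MA) :
    linearCombination R a c ∈ MA :=
  span_le.mpr (range_subset_iff.mpr ha) (by rw [← range_linearCombination]; exact ⟨c, rfl⟩)

theorem LinearIndependent.linearCombination_ne_zero (ha : LinearIndependent R a) {c : ι →₀ R}
    (hc : c ≠ 0) : linearCombination R a c ≠ 0 :=
  fun h => hc (linearIndependent_iff.mp ha c h)

theorem span_range_add_subset (hAB : A + B ⊆ A) (hMA : (MA : Set X) ⊆ A ∪ {0})
    (hMB : (MB : Set X) ⊆ B ∪ {0})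
    (ha : LinearIndependent R a) (haMA : ∀ i, a i ∈ MA) (hmMB : ∀ i, m i ∈ MB) :
    (span R (range (a + m)) : Set X) ⊆ A ∪ {0} := by
  rintro _ hy
  rw [SetLike.mem_coe, ← range_linearCombination, LinearMap.mem_range] at hy
  obtain ⟨c, rfl⟩ := hy
  by_cases hc : c = 0
  · simp [hc]
  have haA : linearCombination R a c ∈ A :=
    (hMA (linearCombination_mem_submodule c haMA)).resolve_right (ha.linearCombination_ne_zero hc)
  left
  rw [linearCombination_add_family]
  exact add_mem_of_add_subset hAB haA (hMB (linearCombination_mem_submodule c hmMB))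

theorem linearIndependent_add (hAB : Disjoint A B) (hMA : (MA : Set X) ⊆ A ∪ {0})
    (hMB : (MB : Set X) ⊆ B ∪ {0})
    (ha : LinearIndependent R a) (haMA : ∀ i, a i ∈ MA) (hmMB : ∀ i, m i ∈ MB) :
    LinearIndependent R (a + m) := by
  refine linearIndependent_iff.mpr fun c hc => by_contra fun hc0 => ?_
  have hne := ha.linearCombination_ne_zero hc0
  rw [linearCombination_add_family, add_eq_zero_iff_eq_neg] at hc
  have haA := (hMA (linearCombination_mem_submodule c haMA)).resolve_right hne
  have haB : linearCombination R a c ∈ B :=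
    (hMB (hc ▸ MB.neg_mem (linearCombination_mem_submodule c hmMB))).resolve_right hne
  exact hAB.notMem_of_mem_left haA haB

end Lineability

section Density

variable {X : Type*} [AddCommGroup X] [Module ℝ X] [TopologicalSpace X] [ContinuousAdd X]
  [ContinuousSMul ℝ X]

theorem Dense.exists_add_smul_mem {S : Set X} (hS : Dense S) {U : Set X} (hU : IsOpen U)
    (hne : U.Nonempty) (x : X) : ∃ s ∈ S, ∃ t : ℝ, t ≠ 0 ∧ s + t • x ∈ U := by
  obtain ⟨b, hbS, hbU⟩ := hS.exists_mem_open hU hne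
  have hline : Filter.Tendsto (fun t : ℝ => b + t • x) (𝓝[≠] 0) (𝓝 b) :=
    ((continuous_const.add (continuous_id.smul continuous_const)).tendsto' 0 b
      (by simp)).mono_left nhdsWithin_le_nhds
  obtain ⟨t, ht, ht0⟩ :=
    ((hline.eventually_mem (hU.mem_nhds hbU)).and self_mem_nhdsWithin).exists
  exact ⟨b, hbS, t, ht0, ht⟩

theorem exists_denseRange_units_smul_add {ι : Type*} (x : ι → X) {M : Submodule ℝ X}
    (hM : Dense (M : Set X)) {𝓑 : Set (Set X)} (h𝓑 : TopologicalSpace.IsTopologicalBasis 𝓑)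
    (f : {U // U ∈ 𝓑 ∧ U.Nonempty} ↪ ι) :
    ∃ (t : ι → ℝˣ) (m : ι → X), (∀ i, m i ∈ M) ∧ DenseRange (t • x + m) := by
  choose m₀ hm₀ t₀ ht₀ hmem using fun U : {U // U ∈ 𝓑 ∧ U.Nonempty} =>
    hM.exists_add_smul_mem (h𝓑.isOpen U.2.1) U.2.2 (x (f U))
  refine ⟨Function.extend f (fun U => Units.mk0 (t₀ U) (ht₀ U)) 1,
    Function.extend f m₀ 0, fun i => ?_, ?_⟩
  · by_cases hi : ∃ U, f U = i
    · obtain ⟨U, rfl⟩ := hi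
      rw [f.injective.extend_apply]
      exact hm₀ U
    · rw [Function.extend_apply' _ _ _ hi]
      exact M.zero_mem
  · refine h𝓑.dense_iff.mpr fun U hU hne => ⟨_, ?_, f ⟨U, hU, hne⟩, rfl⟩
    simpa [f.injective.extend_apply, add_comm] using hmem ⟨U, hU, hne⟩

end Density

theorem stmt0_general {X : Type} [AddCommGroup X] [Module ℝ X] [TopologicalSpace X]
    [IsTopologicalAddGroup X] [ContinuousSMul ℝ X]
    (A B : Set X) (hAB : A + B ⊆ A)
    (hB : ∃ M : Submodule ℝ X, (M : Set X) ⊆ B ∪ {0} ∧ Dense (M : Set X))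
    (α : Cardinal)
    (hA : ∃ M : Submodule ℝ X, (M : Set X) ⊆ A ∪ {0} ∧ Module.rank ℝ M = α)
    (h𝓑 : ∃ 𝓑 : Set (Set X), TopologicalSpace.IsTopologicalBasis 𝓑 ∧ #𝓑 ≤ α) :
    (∃ D : Submodule ℝ X, (D : Set X) ⊆ A ∪ {0} ∧ Dense (D : Set X)) ∧
    (A ∩ B = ∅ → ∃ D : Submodule ℝ X, (D : Set X) ⊆ A ∪ {0} ∧ Dense (D : Set X) ∧
      Module.rank ℝ D = α) := by
  obtain ⟨MB, hMB, hMBdense⟩ := hB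
  obtain ⟨MA, hMA, rfl⟩ := hA
  obtain ⟨𝓑, h𝓑, hcard⟩ := h𝓑
  let v := Module.Basis.ofVectorSpace ℝ MA
  have hJ : #{U // U ∈ 𝓑 ∧ U.Nonempty} ≤ #(Module.Basis.ofVectorSpaceIndex ℝ MA) :=
    v.mk_eq_rank''.symm ▸ (mk_le_mk_of_subset fun _ hU => hU.1).trans hcard
  obtain ⟨f⟩ := hJ
  obtain ⟨t, m, hmMB, hdense⟩ :=
    exists_denseRange_units_smul_add (fun i => (v i : X)) hMBdense h𝓑 f
  have hli : LinearIndependent ℝ (t • fun i => (v i : X)) :=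
    (v.linearIndependent.map' MA.subtype MA.ker_subtype).units_smul t
  have htMA : ∀ i, (t • fun i => (v i : X)) i ∈ MA :=
    fun i => MA.smul_of_tower_mem (t i) (v i).2
  have hD := span_range_add_subset hAB hMA hMB hli htMA hmMB
  have hDdense := hdense.mono (subset_span (R := ℝ))
  refine ⟨⟨_, hD, hDdense⟩, fun hdisj => ⟨_, hD, hDdense, ?_⟩⟩
  have hli' := linearIndependent_add (disjoint_iff_inter_eq_empty.mpr hdisj) hMA hMB hli htMA hmMB
  rw [rank_span hli', mk_range_eq _ hli'.injective, v.mk_eq_rank'']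

theorem stmt0 {X : Type} [AddCommGroup X] [Module ℝ X] [TopologicalSpace X]
    [IsTopologicalAddGroup X] [ContinuousSMul ℝ X]
    (A B : Set X) (hAB : A + B ⊆ A)
    (hB : ∃ M : Submodule ℝ X, (M : Set X) ⊆ B ∪ {0} ∧ Dense (M : Set X))
    (α : Cardinal) (hα : ℵ₀ ≤ α)
    (hA : ∃ M : Submodule ℝ X, (M : Set X) ⊆ A ∪ {0} ∧ Module.rank ℝ M = α)
    (h𝓑 : ∃ 𝓑 : Set (Set X), TopologicalSpace.IsTopologicalBasis 𝓑 ∧ #𝓑 ≤ α) :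
    (∃ D : Submodule ℝ X, (D : Set X) ⊆ A ∪ {0} ∧ Dense (D : Set X)) ∧
    (A ∩ B = ∅ → ∃ D : Submodule ℝ X, (D : Set X) ⊆ A ∪ {0} ∧ Dense (D : Set X) ∧
      Module.rank ℝ D = α) :=
  stmt0_general A B hAB hB α hA h𝓑
end

section
/- Let X be a metrizable separable topological vector space, let A, B ⊆ X with A + B ⊆ A, B dense-lineable, A ∩ B = ∅, and suppose A is α-lineable for some infinite cardinal α. Then A ∪ {0} contains a dense vector subspace D with dim(D) = α. -/
/-!
Let `M_A ⊆ A ∪ {0}` have a basis `(u_i)_{i ∈ ι}` with `#ι = α`, and let `M_B ⊆ B ∪ {0}` be dense.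
Since `A ∩ B = ∅`, the `u_i` stay linearly independent modulo `M_B`, and so does any family
`c_i • u_i + m_i` with `c_i ≠ 0`, `m_i ∈ M_B`; its span `D` therefore has dimension `α` and meets
`M_B` only in `0`. A nonzero vector of `D ⊆ M_A + M_B` then has a nonzero `M_A`-component, so it
lies in `A` or in `A + B ⊆ A`. As `ι` is infinite, it can be made to run over a countable basis of
the topology: for each basic open set `U` choose `m_i ∈ U ∩ M_B` by density and then `c_i` so small
that `c_i • u_i + m_i` is still in `U`. Then `D` meets every nonempty open set.
-/

open Cardinal Pointwise Set Filter Topology TopologicalSpace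

section LinearAlgebra

variable {ι R V : Type*} [Ring R] [AddCommGroup V] [Module R V]

theorem Submodule.linearIndependent_mkQ_comp_of_disjoint {N N' : Submodule R V} (h : Disjoint N N')
    {u : ι → V} (hu : LinearIndependent R u) (huN : ∀ i, u i ∈ N) :
    LinearIndependent R (N'.mkQ ∘ u) :=
  hu.map <| by
    rw [Submodule.ker_mkQ]
    exact h.mono_left (Submodule.span_le.mpr (range_subset_iff.mpr huN))

theorem Submodule.linearIndependent_mkQ_comp_units_smul_add {N : Submodule R V} {u : ι → V}
    (hu : LinearIndependent R (N.mkQ ∘ u)) (c : ι → Rˣ) (m : ι → N) :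
    LinearIndependent R (N.mkQ ∘ fun i => c i • u i + m i) := by
  have : N.mkQ ∘ (fun i => c i • u i + m i) = c • (N.mkQ ∘ u) := by
    funext i
    simp [(Submodule.Quotient.mk_eq_zero N).mpr (m i).2, Units.smul_def]
  rw [this]
  exact hu.units_smul c

end LinearAlgebra

theorem subset_union_zero_of_le_sup {X : Type*} [AddCommGroup X] {R : Type*} [Ring R] [Module R X]
    {A B : Set X} (hAB : A + B ⊆ A) {MA MB D : Submodule R X} (hMA : (MA : Set X) ⊆ A ∪ {0})
    (hMB : (MB : Set X) ⊆ B ∪ {0}) (hD : D ≤ MA ⊔ MB) (hDMB : Disjoint D MB) :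
    (D : Set X) ⊆ A ∪ {0} := by
  intro x hxD
  by_cases hx : x = 0
  · exact Or.inr hx
  obtain ⟨a, haMA, b, hbMB, rfl⟩ := Submodule.mem_sup.mp (hD hxD)
  have ha : a ≠ 0 := by
    rintro rfl
    rw [zero_add] at hx hxD
    exact hx (Submodule.disjoint_def.mp hDMB b hxD hbMB)
  have haA : a ∈ A := (hMA haMA).resolve_right ha
  rcases hMB hbMB with hbB | rfl
  · exact Or.inl (hAB (add_mem_add haA hbB))
  · rw [add_zero]
    exact Or.inl haA

theorem IsOpen.exists_ne_zero_smul_add_mem {𝕜 X : Type*} [NontriviallyNormedField 𝕜]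
    [AddCommGroup X] [Module 𝕜 X] [TopologicalSpace X] [ContinuousAdd X] [ContinuousSMul 𝕜 X]
    {U : Set X} (hU : IsOpen U) {v : X} (hv : v ∈ U) (u : X) :
    ∃ c : 𝕜, c ≠ 0 ∧ c • u + v ∈ U := by
  have hcont : Continuous fun c : 𝕜 => c • u + v := by fun_prop
  have hnhds : ∀ᶠ c in 𝓝 (0 : 𝕜), c • u + v ∈ U :=
    hcont.continuousAt.preimage_mem_nhds (by simpa using hU.mem_nhds hv)
  have hnhdsNE : ∀ᶠ c in 𝓝[≠] (0 : 𝕜), c • u + v ∈ U := hnhds.filter_mono nhdsWithin_le_nhds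
  exact (hnhdsNE.and self_mem_nhdsWithin).exists.imp fun c hc => ⟨hc.2, hc.1⟩

theorem Submodule.exists_dense_range_units_smul_add {𝕜 X ι : Type*} [NontriviallyNormedField 𝕜]
    [AddCommGroup X] [Module 𝕜 X] [TopologicalSpace X] [ContinuousAdd X] [ContinuousSMul 𝕜 X]
    [SecondCountableTopology X] [Infinite ι] {M : Submodule 𝕜 X} (hM : Dense (M : Set X))
    (u : ι → X) : ∃ (c : ι → 𝕜ˣ) (m : ι → M), Dense (range fun i => c i • u i + m i) := by
  set T := {U ∈ countableBasis X | U.Nonempty}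
  have hT : T.Nonempty := by
    obtain ⟨U, hU, h0U⟩ := (isBasis_countableBasis X).exists_subset_of_mem_open
      (mem_univ (0 : X)) isOpen_univ
    exact ⟨U, hU, 0, h0U.1⟩
  obtain ⟨σ₀, hσ₀⟩ := Set.Countable.exists_surjective hT
    ((countable_countableBasis X).mono fun _ hU => hU.1)
  set σ : ι → T := σ₀ ∘ Function.invFun (Infinite.natEmbedding ι)
  have hσ : Function.Surjective σ :=
    hσ₀.comp (Function.invFun_surjective (Infinite.natEmbedding ι).injective)
  have hopen : ∀ i, IsOpen (σ i : Set X) :=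
    fun i => (isBasis_countableBasis X).isOpen (σ i).2.1
  have hm : ∀ i, ∃ m : M, (m : X) ∈ (σ i : Set X) := fun i => by
    obtain ⟨m, hmU, hmM⟩ := hM.inter_open_nonempty _ (hopen i) (σ i).2.2
    exact ⟨⟨m, hmM⟩, hmU⟩
  choose m hmU using hm
  have hc : ∀ i, ∃ c : 𝕜ˣ, (c : 𝕜) • u i + m i ∈ (σ i : Set X) := fun i => by
    obtain ⟨c, hc0, hcU⟩ := (hopen i).exists_ne_zero_smul_add_mem (𝕜 := 𝕜) (hmU i) (u i)
    exact ⟨Units.mk0 c hc0, hcU⟩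
  choose c hcU using hc
  refine ⟨c, m, (isBasis_countableBasis X).dense_iff.mpr fun U hU hUne => ?_⟩
  obtain ⟨i, hi⟩ := hσ ⟨U, hU, hUne⟩
  exact ⟨_, by simpa only [hi, Units.smul_def] using hcU i, i, rfl⟩

theorem stmt1 {X : Type} [AddCommGroup X] [Module ℝ X] [TopologicalSpace X]
    [IsTopologicalAddGroup X] [ContinuousSMul ℝ X]
    [TopologicalSpace.MetrizableSpace X] [TopologicalSpace.SeparableSpace X]
    (A B : Set X) (hAB : A + B ⊆ A)
    (hB : ∃ M : Submodule ℝ X, (M : Set X) ⊆ B ∪ {0} ∧ Dense (M : Set X))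
    (hdisj : A ∩ B = ∅)
    (α : Cardinal) (hα : ℵ₀ ≤ α)
    (hA : ∃ M : Submodule ℝ X, (M : Set X) ⊆ A ∪ {0} ∧ Module.rank ℝ M = α) :
    ∃ D : Submodule ℝ X, (D : Set X) ⊆ A ∪ {0} ∧ Dense (D : Set X) ∧
      Module.rank ℝ D = α := by
  let := pseudoMetrizableSpacePseudoMetric X
  have := UniformSpace.secondCountable_of_separable X
  obtain ⟨MB, hMB, hMBdense⟩ := hB
  obtain ⟨MA, hMA, rfl⟩ := hA
  have hdisjM : Disjoint MA MB := Submodule.disjoint_def.mpr fun x hxA hxB => by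
    by_contra hx
    exact (hdisj ▸ ⟨(hMA hxA).resolve_right hx, (hMB hxB).resolve_right hx⟩ : x ∈ (∅ : Set X))
  set b := Module.Basis.ofVectorSpace ℝ MA
  have := Cardinal.infinite_iff.mpr (b.mk_eq_rank''.symm ▸ hα)
  have hu : LinearIndependent ℝ (MB.mkQ ∘ fun i => (b i : X)) :=
    Submodule.linearIndependent_mkQ_comp_of_disjoint hdisjM
      (b.linearIndependent.map' MA.subtype (Submodule.ker_subtype MA)) fun i => (b i).2
  obtain ⟨c, m, hdense⟩ := Submodule.exists_dense_range_units_smul_add hMBdense fun i => (b i : X)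
  have hg := Submodule.linearIndependent_mkQ_comp_units_smul_add hu c m
  have hDle : Submodule.span ℝ (range fun i => c i • (b i : X) + m i) ≤ MA ⊔ MB := by
    rw [Submodule.span_le, range_subset_iff]
    exact fun i => add_mem (Submodule.mem_sup_left (MA.smul_of_tower_mem _ (b i).2))
      (Submodule.mem_sup_right (m i).2)
  refine ⟨_, subset_union_zero_of_le_sup hAB hMA hMB hDle ?_, hdense.mono Submodule.subset_span, ?_⟩
  · simpa using Submodule.range_ker_disjoint hg
  · rw [rank_span (hg.of_comp _), mk_range_eq _ (hg.of_comp _).injective, b.mk_eq_rank'']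
end

section
/- Let X be a metrizable separable topological vector space and Y a vector subspace of X. If X \ Y is lineable (i.e., Y has infinite algebraic codimension), then X \ Y ∪ {0} contains a dense vector subspace of X. In particular, for infinite-dimensional X, lineability and dense-lineability of X \ Y are equivalent. -/
/-!
A subspace `M` missing `Y` embeds into `X ⧸ Y`, so `X ⧸ Y` is infinite-dimensional. Pick a point
`z n` in each set `b n` of a countable basis of the topology. Recursively choose `u n` in `X ⧸ Y`
outside the finite-dimensional span of `[z 0], …, [z n], u 0, …, u (n - 1)`; then for all nonzero
scalars `ε n` the vectors `[z n] + ε n • u n` are linearly independent. Lifting `u n` to `m n` and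
taking `ε n` so small that `z n + ε n • m n` stays in the open set `b n`, these points span a
subspace that meets every basis set, hence is dense, and meets `Y` only in `0`.
Conversely, a finite-dimensional subspace is closed, so a dense one is all of `X`.
-/

open Cardinal Set Submodule Filter Topology TopologicalSpace

section Algebra

variable {K V : Type*} [DivisionRing K] [AddCommGroup V] [Module K V]

theorem linearIndependent_of_notMem_span_image_Iio {w : ℕ → V}
    (hw : ∀ n, w n ∉ span K (w '' Iio n)) : LinearIndependent K w := by
  have hIio : ∀ n, LinearIndepOn K w (Iio n) := by
    intro n
    induction n with
    | zero => simp
    | succ n ih =>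
      rw [Iio_add_one_eq_Iic, ← Iio_insert]
      exact ih.insert (hw n)
  rw [← linearIndepOn_univ_iff, ← iUnion_Iio]
  exact linearIndepOn_iUnion_of_directed (monotone_Iio.directed_le) hIio

theorem Submodule.FG.ne_top_of_aleph0_le_rank (hV : ℵ₀ ≤ Module.rank K V) {S : Submodule K V}
    (hS : S.FG) : S ≠ ⊤ := by
  rintro rfl
  have : Module.Finite K V := Module.finite_def.mpr hS
  exact (Module.rank_lt_aleph0 K V).not_ge hV

variable (K) in
noncomputable def avoidingFlag (a : ℕ → V) : ℕ → Submodule K V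
  | 0 => K ∙ a 0
  | n + 1 => avoidingFlag a n ⊔ K ∙ Classical.epsilon (· ∉ avoidingFlag a n) ⊔ K ∙ a (n + 1)

theorem avoidingFlag_succ (a : ℕ → V) (n : ℕ) :
    avoidingFlag K a (n + 1) = avoidingFlag K a n ⊔
      K ∙ Classical.epsilon (· ∉ avoidingFlag K a n) ⊔ K ∙ a (n + 1) := by
  rw [avoidingFlag]

theorem avoidingFlag_fg (a : ℕ → V) (n : ℕ) : (avoidingFlag K a n).FG := by
  induction n with
  | zero => exact fg_span_singleton _
  | succ n ih =>
    rw [avoidingFlag_succ]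
    exact (ih.sup (fg_span_singleton _)).sup (fg_span_singleton _)

theorem exists_linearIndependent_add_smul (hV : ℵ₀ ≤ Module.rank K V) (a : ℕ → V) :
    ∃ u : ℕ → V, ∀ ε : ℕ → K, (∀ n, ε n ≠ 0) → LinearIndependent K (fun n ↦ a n + ε n • u n) := by
  refine ⟨fun n ↦ Classical.epsilon (· ∉ avoidingFlag K a n), fun ε hε ↦ ?_⟩
  set F := avoidingFlag K a
  set u := fun n ↦ Classical.epsilon (· ∉ F n)
  have hu : ∀ n, u n ∉ F n := fun n ↦
    Classical.epsilon_spec (SetLike.exists_not_mem_of_ne_top _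
      ((avoidingFlag_fg a n).ne_top_of_aleph0_le_rank hV))
  have hsucc : ∀ n, F n ≤ F (n + 1) ∧ u n ∈ F (n + 1) ∧ a (n + 1) ∈ F (n + 1) := fun n ↦ by
    simp only [F, u, avoidingFlag_succ]
    exact ⟨le_sup_left.trans le_sup_left, mem_sup_left (mem_sup_right (mem_span_singleton_self _)),
      mem_sup_right (mem_span_singleton_self _)⟩
  have ha : ∀ n, a n ∈ F n
    | 0 => mem_span_singleton_self _
    | n + 1 => (hsucc n).2.2
  have hmono : Monotone F := monotone_nat_of_le_succ fun n ↦ (hsucc n).1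
  -- All earlier vectors `a m + ε m • u m` lie in `F n`, and so does `a n`, but `u n` does not.
  refine linearIndependent_of_notMem_span_image_Iio fun n hn ↦ hu n ?_
  have hspan : span K ((fun n ↦ a n + ε n • u n) '' Iio n) ≤ F n := by
    rw [span_le]
    rintro _ ⟨m, hm, rfl⟩
    have hle : F (m + 1) ≤ F n := hmono hm
    exact add_mem (hle (hmono m.le_succ (ha m))) (smul_mem _ _ (hle (hsucc m).2.1))
  have := sub_mem (hspan hn) (ha n)
  rwa [add_sub_cancel_left, smul_mem_iff _ (hε n)] at this

end Algebra

theorem Submodule.coe_subset_compl_union_zero_iff_disjoint {R M : Type*} [Semiring R]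
    [AddCommMonoid M] [Module R M] {p q : Submodule R M} :
    (p : Set M) ⊆ (q : Set M)ᶜ ∪ {0} ↔ Disjoint p q := by
  simp only [disjoint_def, subset_def, mem_union, mem_compl_iff, SetLike.mem_coe,
    mem_singleton_iff, or_iff_not_imp_left, not_not]

theorem Submodule.rank_le_rank_quotient_of_disjoint {R M : Type*} [Ring R] [AddCommGroup M]
    [Module R M] {p q : Submodule R M} (h : Disjoint p q) :
    Module.rank R p ≤ Module.rank R (M ⧸ q) := by
  refine LinearMap.rank_le_of_injective (q.mkQ ∘ₗ p.subtype) ?_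
  rw [← LinearMap.ker_eq_bot, LinearMap.ker_comp, ker_mkQ, ← disjoint_iff_comap_eq_bot]
  exact h

theorem exists_ne_zero_add_smul_mem {𝕜 X : Type*} [NontriviallyNormedField 𝕜] [AddCommGroup X]
    [Module 𝕜 X] [TopologicalSpace X] [ContinuousAdd X] [ContinuousSMul 𝕜 X] {U : Set X}
    (hU : IsOpen U) {z : X} (hz : z ∈ U) (m : X) : ∃ c : 𝕜, c ≠ 0 ∧ z + c • m ∈ U := by
  have hlim : Tendsto (fun c : 𝕜 ↦ z + c • m) (𝓝[≠] 0) (𝓝 z) :=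
    ((continuous_const.add (continuous_id.smul continuous_const)).tendsto' 0 z
      (by simp)).mono_left nhdsWithin_le_nhds
  exact ((eventually_mem_nhdsWithin (a := (0 : 𝕜))).and (hlim.eventually (hU.mem_nhds hz))).exists

theorem TopologicalSpace.exists_seq_isTopologicalBasis_nonempty (X : Type*) [TopologicalSpace X]
    [SecondCountableTopology X] [Nonempty X] :
    ∃ b : ℕ → Set X, IsTopologicalBasis (range b) ∧ ∀ n, (b n).Nonempty := by
  obtain ⟨t, htc, hempty, htb⟩ := exists_countable_basis X
  obtain ⟨s, hs, -⟩ := htb.exists_subset_of_mem_open (mem_univ (Classical.arbitrary X)) isOpen_univ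
  obtain ⟨b, rfl⟩ := htc.exists_eq_range ⟨s, hs⟩
  exact ⟨b, htb, fun n ↦ nonempty_iff_ne_empty.mpr fun h ↦ hempty (h ▸ mem_range_self n)⟩

section TVS

variable {𝕜 X : Type*} [NontriviallyNormedField 𝕜] [AddCommGroup X] [Module 𝕜 X]
  [TopologicalSpace X]

theorem Submodule.exists_dense_disjoint_of_aleph0_le_rank_quotient [ContinuousAdd X]
    [ContinuousSMul 𝕜 X] [SecondCountableTopology X] {Y : Submodule 𝕜 X}
    (hY : ℵ₀ ≤ Module.rank 𝕜 (X ⧸ Y)) : ∃ D : Submodule 𝕜 X, Disjoint D Y ∧ Dense (D : Set X) := by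
  obtain ⟨b, hb, hbne⟩ := exists_seq_isTopologicalBasis_nonempty X
  choose z hz using hbne
  obtain ⟨u, hu⟩ := exists_linearIndependent_add_smul hY (Y.mkQ ∘ z)
  choose m hm using fun n ↦ Y.mkQ_surjective (u n)
  choose ε hε hεb using fun n ↦
    exists_ne_zero_add_smul_mem (𝕜 := 𝕜) (hb.isOpen (mem_range_self n)) (hz n) (m n)
  set y := fun n ↦ z n + ε n • m n
  have hy : LinearIndependent 𝕜 (Y.mkQ ∘ y) := by
    have hqy : Y.mkQ ∘ y = fun n ↦ (Y.mkQ ∘ z) n + ε n • u n := by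
      funext n
      simp only [Function.comp, y, map_add, map_smul, hm]
    exact hqy ▸ hu ε hε
  refine ⟨span 𝕜 (range y), ker_mkQ Y ▸ range_ker_disjoint hy, ?_⟩
  refine Dense.mono subset_span (hb.dense_iff.mpr ?_)
  rintro _ ⟨n, rfl⟩ -
  exact ⟨y n, hεb n, mem_range_self n⟩

theorem Submodule.aleph0_le_rank_of_dense [CompleteSpace 𝕜] [IsTopologicalAddGroup X]
    [ContinuousSMul 𝕜 X] [T2Space X] (hX : ℵ₀ ≤ Module.rank 𝕜 X) {D : Submodule 𝕜 X}
    (hD : Dense (D : Set X)) : ℵ₀ ≤ Module.rank 𝕜 D := by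
  by_contra! hlt
  have : FiniteDimensional 𝕜 D := Module.rank_lt_aleph0_iff.mp hlt
  have hDtop : D = ⊤ := by
    rw [← SetLike.coe_set_eq, top_coe, ← hD.closure_eq, (closed_of_finiteDimensional D).closure_eq]
  rw [hDtop, rank_top] at hlt
  exact hlt.not_ge hX

end TVS

theorem stmt3 {X : Type} [AddCommGroup X] [Module ℝ X] [TopologicalSpace X]
    [IsTopologicalAddGroup X] [ContinuousSMul ℝ X]
    [TopologicalSpace.MetrizableSpace X] [TopologicalSpace.SeparableSpace X]
    (Y : Submodule ℝ X) :
    ((∃ M : Submodule ℝ X, (M : Set X) ⊆ (Y : Set X)ᶜ ∪ {0} ∧ ℵ₀ ≤ Module.rank ℝ M) →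
      ∃ D : Submodule ℝ X, (D : Set X) ⊆ (Y : Set X)ᶜ ∪ {0} ∧ Dense (D : Set X)) ∧
    (ℵ₀ ≤ Module.rank ℝ X →
      ((∃ M : Submodule ℝ X, (M : Set X) ⊆ (Y : Set X)ᶜ ∪ {0} ∧ ℵ₀ ≤ Module.rank ℝ M) ↔
        ∃ D : Submodule ℝ X, (D : Set X) ⊆ (Y : Set X)ᶜ ∪ {0} ∧ Dense (D : Set X))) := by
  -- A compatible metric makes the separable space `X` second countable.
  let := metrizableSpaceMetric X
  have lineable_imp_denseLineable :
      (∃ M : Submodule ℝ X, (M : Set X) ⊆ (Y : Set X)ᶜ ∪ {0} ∧ ℵ₀ ≤ Module.rank ℝ M) →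
        ∃ D : Submodule ℝ X, (D : Set X) ⊆ (Y : Set X)ᶜ ∪ {0} ∧ Dense (D : Set X) := by
    rintro ⟨M, hMY, hM⟩
    rw [coe_subset_compl_union_zero_iff_disjoint] at hMY
    obtain ⟨D, hDY, hD⟩ := exists_dense_disjoint_of_aleph0_le_rank_quotient
      (hM.trans (rank_le_rank_quotient_of_disjoint hMY))
    exact ⟨D, coe_subset_compl_union_zero_iff_disjoint.mpr hDY, hD⟩
  refine ⟨lineable_imp_denseLineable, fun hX ↦ ⟨lineable_imp_denseLineable, ?_⟩⟩
  rintro ⟨D, hDY, hD⟩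
  exact ⟨D, hDY, aleph0_le_rank_of_dense hX hD⟩
end

section
/- Assuming the Continuum Hypothesis, if X is a non-separable F-space and Y is a closed separable vector subspace of X, then X \ Y ∪ {0} contains a vector subspace Z with dim(Z) = dim(X). -/
/-!
Take an algebraic complement `Z` of `Y`. Since `X = span (Y ∪ Z)` is not separable while `Y` is,
`Z` cannot have countable dimension, so `dim Z ≥ ℵ₁ = 𝔠` under CH. A separable metrizable space
has at most `𝔠` points, hence `dim Y ≤ 𝔠 ≤ dim Z` and `dim X = dim Y + dim Z = dim Z`.
-/

open Cardinal TopologicalSpace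
open scoped BoundedContinuousFunction

universe u v

theorem Cardinal.continuum_le_of_aleph0_lt (hCH : continuum.{u} = ℵ₁) {c : Cardinal.{v}}
    (hc : ℵ₀ < c) : 𝔠 ≤ c := by
  have hCH' : continuum.{v} = ℵ₁ := by
    apply lift_injective.{u}
    rw [lift_continuum, ← lift_continuum.{v}, hCH, lift_aleph, lift_aleph, Ordinal.lift_one,
      Ordinal.lift_one]
  rw [hCH', ← succ_aleph0]
  exact Order.succ_le_of_lt hc

theorem TopologicalSpace.IsSeparable.mk_le_continuum {X : Type u} [TopologicalSpace X]
    [MetrizableSpace X] {s : Set X} (hs : IsSeparable s) : #s ≤ 𝔠 := by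
  have := hs.secondCountableTopology
  obtain ⟨f, hf⟩ := exists_embedding_l_infty s
  have hcoe : #(ℕ →ᵇ ℝ) ≤ #(ℕ → ℝ) := mk_le_of_injective DFunLike.coe_injective
  rw [mk_pi, prod_const, mk_real, lift_id, mk_nat, lift_aleph0, continuum_power_aleph0] at hcoe
  simpa using (lift_mk_le_lift_mk_of_injective hf.injective).trans (lift_le.2 hcoe)

theorem Submodule.isSeparable_of_rank_le_aleph0 {K M : Type*} [DivisionRing K] [TopologicalSpace K]
    [SeparableSpace K] [AddCommGroup M] [Module K M] [TopologicalSpace M] [ContinuousAdd M]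
    [ContinuousSMul K M] (N : Submodule K M) (hN : Module.rank K N ≤ ℵ₀) :
    IsSeparable (N : Set M) := by
  let b := Module.Basis.ofVectorSpace K N
  have : Countable (Module.Basis.ofVectorSpaceIndex K N) := by
    rw [← mk_le_aleph0_iff, b.mk_eq_rank'']
    exact hN
  have hspan : Submodule.span K (Set.range (N.subtype ∘ b)) = N := by
    rw [Set.range_comp, Submodule.span_image, b.span_eq, Submodule.map_subtype_top]
  rw [← hspan]
  exact (Set.countable_range _).isSeparable.span

theorem Submodule.rank_eq_add_of_isCompl {K M : Type*} [DivisionRing K] [AddCommGroup M]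
    [Module K M] {Y Z : Submodule K M} (h : IsCompl Y Z) :
    Module.rank K M = Module.rank K Y + Module.rank K Z :=
  (Submodule.prodEquivOfIsCompl Y Z h).rank_eq.symm.trans rank_prod'

theorem Submodule.aleph0_lt_rank_of_isCompl {K M : Type*} [DivisionRing K] [TopologicalSpace K]
    [SeparableSpace K] [AddCommGroup M] [Module K M] [TopologicalSpace M] [ContinuousAdd M]
    [ContinuousSMul K M] (hM : ¬ SeparableSpace M) {Y Z : Submodule K M} (h : IsCompl Y Z)
    (hY : IsSeparable (Y : Set M)) : ℵ₀ < Module.rank K Z := by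
  by_contra! hZ
  apply hM
  rw [← isSeparable_univ_iff, ← Submodule.top_coe (R := K), ← h.sup_eq_top, ← Y.span_eq,
    ← Z.span_eq, ← Submodule.span_union]
  exact (hY.union (Z.isSeparable_of_rank_le_aleph0 hZ)).span

theorem Submodule.coe_subset_compl_union_zero_of_disjoint {R M : Type*} [Semiring R]
    [AddCommMonoid M] [Module R M] {Y Z : Submodule R M} (h : Disjoint Y Z) :
    (Z : Set M) ⊆ (Y : Set M)ᶜ ∪ {0} := fun x hxZ ↦
  or_iff_not_imp_left.2 fun hxY ↦ Submodule.disjoint_def.1 h x (not_not.1 hxY) hxZ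

theorem stmt5_general {X : Type} [AddCommGroup X] [Module ℝ X] [UniformSpace X]
    [IsTopologicalAddGroup X] [ContinuousSMul ℝ X]
    [TopologicalSpace.MetrizableSpace X]
    (hCH : Cardinal.continuum = Cardinal.aleph 1)
    (hnonsep : ¬ TopologicalSpace.SeparableSpace X)
    (Y : Submodule ℝ X)
    (hsep : TopologicalSpace.IsSeparable (Y : Set X)) :
    ∃ Z : Submodule ℝ X, (Z : Set X) ⊆ (Y : Set X)ᶜ ∪ {0} ∧
      Module.rank ℝ Z = Module.rank ℝ X := by
  obtain ⟨Z, hYZ⟩ := Y.exists_isCompl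
  have hZ : ℵ₀ < Module.rank ℝ Z := Submodule.aleph0_lt_rank_of_isCompl hnonsep hYZ hsep
  have hY : Module.rank ℝ Y ≤ Module.rank ℝ Z :=
    calc Module.rank ℝ Y ≤ #Y := rank_le_card ℝ Y
      _ ≤ 𝔠 := hsep.mk_le_continuum
      _ ≤ Module.rank ℝ Z := Cardinal.continuum_le_of_aleph0_lt hCH hZ
  refine ⟨Z, Submodule.coe_subset_compl_union_zero_of_disjoint hYZ.disjoint, ?_⟩
  rw [Submodule.rank_eq_add_of_isCompl hYZ, add_eq_right hZ.le hY]

theorem stmt5 {X : Type} [AddCommGroup X] [Module ℝ X] [UniformSpace X]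
    [CompleteSpace X] [IsTopologicalAddGroup X] [ContinuousSMul ℝ X]
    [TopologicalSpace.MetrizableSpace X]
    (hCH : Cardinal.continuum = Cardinal.aleph 1)
    (hnonsep : ¬ TopologicalSpace.SeparableSpace X)
    (Y : Submodule ℝ X) (hclosed : IsClosed (Y : Set X))
    (hsep : TopologicalSpace.IsSeparable (Y : Set X)) :
    ∃ Z : Submodule ℝ X, (Z : Set X) ⊆ (Y : Set X)ᶜ ∪ {0} ∧
      Module.rank ℝ Z = Module.rank ℝ X :=
  stmt5_general hCH hnonsep Y hsep
end

section
/- On the space X = C₀([0,∞)) ∩ R([0,∞)) of continuous functions f : [0,∞) → ℝ with f(x) → 0 as x → ∞ that are improperly Riemann-integrable on [0,∞), the expression ‖f‖ := sup_{x≥0} |f(x)| + sup_{x≥0} |∫₀ˣ f(t) dt| defines a norm making X a separable Banach space, and the set of continuous functions with bounded support is a dense subspace of X. -/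
open MeasureTheory Filter

/-- Continuous on `[0,∞)`, vanishing at `∞`, improperly Riemann-integrable on `[0,∞)`
(and, by convention, zero on `(-∞,0)`). -/
def Stmt15Good (f : ℝ → ℝ) : Prop :=
  (∀ x < (0:ℝ), f x = 0) ∧ ContinuousOn f (Set.Ici 0) ∧
  Tendsto f atTop (nhds 0) ∧
  ∃ L, Tendsto (fun x => ∫ t in (0:ℝ)..x, f t) atTop (nhds L)

/-- `‖f‖ = sup_{x ≥ 0} |f x| + sup_{x ≥ 0} |∫₀ˣ f|`. -/
noncomputable def stmt15Norm (f : ℝ → ℝ) : ℝ :=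
  (⨆ x : Set.Ici (0:ℝ), |f (x : ℝ)|) + ⨆ x : Set.Ici (0:ℝ), |∫ t in (0:ℝ)..(x : ℝ), f t|

/-!
The norm controls `f` and its primitive `F x = ∫₀ˣ f` uniformly on `[0, ∞)`. A Cauchy sequence
therefore converges uniformly together with its primitives: uniform limits keep continuity, the
limit of the primitives is the primitive of the limit, and the Moore–Osgood theorem supplies the
limits at infinity.

For density, `f` is multiplied by a cutoff that is `1` on `[0, b]` and `0` beyond `b + 1`; for large
`b` the error is small because both `f` and the tails `∫_b^x f` are. The truncated function is then
approximated on `[0, n + 1]` by an element of a countable dense subset of `C([0, n + 1], ℝ)`,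
cut off in the same way; the error `e` vanishes beyond `n + 1`, so `‖e‖ ≤ (n + 2) · sup |e|`.
-/

open Set Topology

noncomputable def primitive (f : ℝ → ℝ) (x : ℝ) : ℝ := ∫ t in (0:ℝ)..x, f t

/-- In `ℝ`, `⨆` of an unbounded family is `0`, hence the `BddAbove` hypotheses below. -/
noncomputable def supAbs (f : ℝ → ℝ) : ℝ := ⨆ x : Ici (0:ℝ), |f x|

theorem stmt15Norm_eq_supAbs_add (f : ℝ → ℝ) :
    stmt15Norm f = supAbs f + supAbs (primitive f) := rfl

section supAbs

variable {f g k : ℝ → ℝ}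

theorem supAbs_nonneg (f : ℝ → ℝ) : 0 ≤ supAbs f :=
  Real.iSup_nonneg fun _ => abs_nonneg _

theorem abs_le_supAbs (hf : BddAbove (range fun x : Ici (0:ℝ) => |f x|)) {x : ℝ} (hx : 0 ≤ x) :
    |f x| ≤ supAbs f :=
  le_ciSup hf (⟨x, hx⟩ : Ici (0:ℝ))

theorem supAbs_le {C : ℝ} (h : ∀ x, 0 ≤ x → |f x| ≤ C) : supAbs f ≤ C :=
  ciSup_le fun x => h x x.2

theorem supAbs_le_add_of_abs_le (hf : BddAbove (range fun x : Ici (0:ℝ) => |f x|))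
    (hg : BddAbove (range fun x : Ici (0:ℝ) => |g x|)) (h : ∀ x, 0 ≤ x → |k x| ≤ |f x| + |g x|) :
    supAbs k ≤ supAbs f + supAbs g :=
  supAbs_le fun x hx => (h x hx).trans (add_le_add (abs_le_supAbs hf hx) (abs_le_supAbs hg hx))

theorem supAbs_smul (c : ℝ) (f : ℝ → ℝ) : supAbs (c • f) = |c| * supAbs f := by
  simp only [supAbs, Pi.smul_apply, smul_eq_mul, abs_mul]
  exact (Real.mul_iSup_of_nonneg (abs_nonneg c) _).symm

theorem bddAbove_abs_of_continuousOn_of_tendsto {L : ℝ} (hc : ContinuousOn f (Ici 0))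
    (ht : Tendsto f atTop (𝓝 L)) : BddAbove (range fun x : Ici (0:ℝ) => |f x|) := by
  obtain ⟨a, ha⟩ := eventually_atTop.1 (ht.abs.eventually_le_const (lt_add_one |L|))
  obtain ⟨C, hC⟩ := isCompact_Icc.exists_bound_of_continuousOn (hc.mono Icc_subset_Ici_self)
  refine ⟨max C (|L| + 1), forall_mem_range.2 fun x => ?_⟩
  rcases le_total (x : ℝ) a with hxa | hax
  · exact le_max_of_le_left (hC x ⟨x.2, hxa⟩)
  · exact le_max_of_le_right (ha x hax)

end supAbs

section primitive

theorem ContinuousOn.intervalIntegrable_of_Ici {E : Type*} [NormedAddCommGroup E] {f : ℝ → E}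
    {c a b : ℝ} (hf : ContinuousOn f (Ici c)) (ha : c ≤ a) (hb : c ≤ b) :
    IntervalIntegrable f volume a b :=
  (hf.mono fun _ ht => le_trans (le_inf ha hb) ht.1).intervalIntegrable

variable {f g : ℝ → ℝ}

theorem primitive_add (hf : ContinuousOn f (Ici 0)) (hg : ContinuousOn g (Ici 0)) {x : ℝ}
    (hx : 0 ≤ x) : primitive (f + g) x = primitive f x + primitive g x :=
  intervalIntegral.integral_add (hf.intervalIntegrable_of_Ici le_rfl hx)
    (hg.intervalIntegrable_of_Ici le_rfl hx)

theorem primitive_sub (hf : ContinuousOn f (Ici 0)) (hg : ContinuousOn g (Ici 0)) {x : ℝ}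
    (hx : 0 ≤ x) : primitive (f - g) x = primitive f x - primitive g x :=
  intervalIntegral.integral_sub (hf.intervalIntegrable_of_Ici le_rfl hx)
    (hg.intervalIntegrable_of_Ici le_rfl hx)

theorem primitive_smul (c : ℝ) (f : ℝ → ℝ) : primitive (c • f) = c • primitive f :=
  funext fun _ => intervalIntegral.integral_smul c f

theorem ContinuousOn.continuousOn_primitive (hf : ContinuousOn f (Ici 0)) :
    ContinuousOn (primitive f) (Ici 0) := by
  intro x hx
  have hx1 : (0:ℝ) ≤ x + 1 := by linarith [mem_Ici.1 hx]
  have h := intervalIntegral.continuousOn_primitive_interval'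
    (hf.intervalIntegrable_of_Ici le_rfl hx1) left_mem_uIcc x
    (by rw [uIcc_of_le hx1]; exact ⟨hx, by linarith⟩)
  refine h.mono_of_mem_nhdsWithin ?_
  rw [uIcc_of_le hx1, ← Ici_inter_Iic]
  exact inter_mem_nhdsWithin _ (Iic_mem_nhds (by linarith))

theorem intervalIntegral_eq_of_forall_ge_eq_zero {a b x : ℝ} (hc : ContinuousOn f (Ici a))
    (hab : a ≤ b) (hbx : b ≤ x) (hz : ∀ t, b ≤ t → f t = 0) :
    ∫ t in a..x, f t = ∫ t in a..b, f t := by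
  have hzero : ∫ t in b..x, f t = 0 := by
    rw [intervalIntegral.integral_congr (g := fun _ => 0) fun t ht =>
      hz t (by rw [uIcc_of_le hbx] at ht; exact ht.1)]
    simp
  rw [← intervalIntegral.integral_add_adjacent_intervals (hc.intervalIntegrable_of_Ici le_rfl hab)
    (hc.intervalIntegrable_of_Ici hab (hab.trans hbx)), hzero, add_zero]

theorem abs_intervalIntegral_le_of_forall_ge_eq_zero {a b x δ : ℝ} (hc : ContinuousOn f (Ici a))
    (hab : a ≤ b) (hax : a ≤ x) (hδ : ∀ t ∈ Icc a b, |f t| ≤ δ) (hz : ∀ t, b ≤ t → f t = 0) :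
    |∫ t in a..x, f t| ≤ δ * (b - a) := by
  have hδ0 : 0 ≤ δ := (abs_nonneg _).trans (hδ a ⟨le_rfl, hab⟩)
  have key : ∀ y, a ≤ y → y ≤ b → |∫ t in a..y, f t| ≤ δ * (b - a) := fun y hay hyb => by
    have hbound : ∀ t ∈ uIoc a y, ‖f t‖ ≤ δ := fun t ht => by
      rw [uIoc_of_le hay] at ht
      exact hδ t ⟨ht.1.le, ht.2.trans hyb⟩
    calc |∫ t in a..y, f t| ≤ δ * |y - a| :=
          intervalIntegral.norm_integral_le_of_norm_le_const hbound
      _ ≤ δ * (b - a) := by rw [abs_of_nonneg (sub_nonneg.2 hay)]; gcongr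
  rcases le_total x b with hxb | hbx
  · exact key x hax hxb
  · rw [intervalIntegral_eq_of_forall_ge_eq_zero hc hab hbx hz]
    exact key b hab le_rfl

end primitive

theorem stmt15Norm_nonneg (f : ℝ → ℝ) : 0 ≤ stmt15Norm f := by
  rw [stmt15Norm_eq_supAbs_add]
  exact add_nonneg (supAbs_nonneg _) (supAbs_nonneg _)

theorem stmt15Norm_smul (c : ℝ) (f : ℝ → ℝ) : stmt15Norm (c • f) = |c| * stmt15Norm f := by
  rw [stmt15Norm_eq_supAbs_add, stmt15Norm_eq_supAbs_add, primitive_smul, supAbs_smul, supAbs_smul,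
    mul_add]

theorem stmt15Norm_le_of_forall_ge_eq_zero {f : ℝ → ℝ} {b δ : ℝ} (hc : ContinuousOn f (Ici 0))
    (hb : 0 ≤ b) (hδ : ∀ t ∈ Icc 0 b, |f t| ≤ δ) (hz : ∀ t, b ≤ t → f t = 0) :
    stmt15Norm f ≤ δ + δ * b := by
  rw [stmt15Norm_eq_supAbs_add]
  refine add_le_add (supAbs_le fun x hx => ?_) (supAbs_le fun x hx => ?_)
  · rcases le_total x b with hxb | hbx
    · exact hδ x ⟨hx, hxb⟩
    · rw [hz x hbx, abs_zero]
      exact (abs_nonneg _).trans (hδ 0 ⟨le_rfl, hb⟩)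
  · simpa [primitive] using abs_intervalIntegral_le_of_forall_ge_eq_zero hc hb hx hδ hz

namespace Stmt15Good

variable {f g : ℝ → ℝ}

theorem eq_zero_of_neg (hf : Stmt15Good f) {x : ℝ} (hx : x < 0) : f x = 0 := hf.1 x hx

theorem continuousOn (hf : Stmt15Good f) : ContinuousOn f (Ici 0) := hf.2.1

theorem tendsto_zero (hf : Stmt15Good f) : Tendsto f atTop (𝓝 0) := hf.2.2.1

theorem exists_tendsto_primitive (hf : Stmt15Good f) : ∃ L, Tendsto (primitive f) atTop (𝓝 L) :=
  hf.2.2.2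

theorem bddAbove_abs (hf : Stmt15Good f) : BddAbove (range fun x : Ici (0:ℝ) => |f x|) :=
  bddAbove_abs_of_continuousOn_of_tendsto hf.continuousOn hf.tendsto_zero

theorem bddAbove_abs_primitive (hf : Stmt15Good f) :
    BddAbove (range fun x : Ici (0:ℝ) => |primitive f x|) :=
  let ⟨_, hL⟩ := hf.exists_tendsto_primitive
  bddAbove_abs_of_continuousOn_of_tendsto hf.continuousOn.continuousOn_primitive hL

theorem abs_le_stmt15Norm (hf : Stmt15Good f) {x : ℝ} (hx : 0 ≤ x) : |f x| ≤ stmt15Norm f :=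
  (abs_le_supAbs hf.bddAbove_abs hx).trans (le_add_of_nonneg_right (supAbs_nonneg (primitive f)))

theorem abs_primitive_le_stmt15Norm (hf : Stmt15Good f) {x : ℝ} (hx : 0 ≤ x) :
    |primitive f x| ≤ stmt15Norm f :=
  (abs_le_supAbs hf.bddAbove_abs_primitive hx).trans (le_add_of_nonneg_left (supAbs_nonneg _))

theorem add (hf : Stmt15Good f) (hg : Stmt15Good g) : Stmt15Good (f + g) := by
  obtain ⟨Lf, hLf⟩ := hf.exists_tendsto_primitive
  obtain ⟨Lg, hLg⟩ := hg.exists_tendsto_primitive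
  refine ⟨fun x hx => by simp [hf.eq_zero_of_neg hx, hg.eq_zero_of_neg hx],
    hf.continuousOn.add hg.continuousOn, add_zero (0:ℝ) ▸ hf.tendsto_zero.add hg.tendsto_zero,
    Lf + Lg, (hLf.add hLg).congr' ?_⟩
  filter_upwards [eventually_ge_atTop 0] with x hx
  exact (primitive_add hf.continuousOn hg.continuousOn hx).symm

theorem smul (hf : Stmt15Good f) (c : ℝ) : Stmt15Good (c • f) := by
  obtain ⟨L, hL⟩ := hf.exists_tendsto_primitive
  refine ⟨fun x hx => by simp [hf.eq_zero_of_neg hx], hf.continuousOn.const_smul c,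
    mul_zero c ▸ hf.tendsto_zero.const_mul c, c • L, ?_⟩
  show Tendsto (primitive (c • f)) atTop _
  rw [primitive_smul]
  exact hL.const_smul c

end Stmt15Good

theorem stmt15Good_zero : Stmt15Good 0 :=
  ⟨fun _ _ => rfl, continuousOn_const, tendsto_const_nhds, 0, by simp⟩

def stmt15Submodule : Submodule ℝ (ℝ → ℝ) where
  carrier := {f | Stmt15Good f}
  add_mem' := Stmt15Good.add
  zero_mem' := stmt15Good_zero
  smul_mem' c _ hf := hf.smul c

theorem Stmt15Good.sub {f g : ℝ → ℝ} (hf : Stmt15Good f) (hg : Stmt15Good g) :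
    Stmt15Good (f - g) :=
  stmt15Submodule.sub_mem hf hg

theorem stmt15Norm_add_le {f g : ℝ → ℝ} (hf : Stmt15Good f) (hg : Stmt15Good g) :
    stmt15Norm (f + g) ≤ stmt15Norm f + stmt15Norm g := by
  have h₁ : supAbs (f + g) ≤ supAbs f + supAbs g :=
    supAbs_le_add_of_abs_le hf.bddAbove_abs hg.bddAbove_abs fun x _ => abs_add_le _ _
  have h₂ : supAbs (primitive (f + g)) ≤ supAbs (primitive f) + supAbs (primitive g) :=
    supAbs_le_add_of_abs_le hf.bddAbove_abs_primitive hg.bddAbove_abs_primitive fun x hx => by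
      rw [primitive_add hf.continuousOn hg.continuousOn hx]
      exact abs_add_le _ _
  simp only [stmt15Norm_eq_supAbs_add]
  linarith

theorem stmt15Norm_eq_zero_iff {f : ℝ → ℝ} (hf : Stmt15Good f) : stmt15Norm f = 0 ↔ f = 0 := by
  refine ⟨fun h => funext fun x => ?_, fun h => ?_⟩
  · rcases lt_or_ge x 0 with hx | hx
    · exact hf.eq_zero_of_neg hx
    · exact abs_nonpos_iff.1 (h ▸ hf.abs_le_stmt15Norm hx)
  · simp [h, stmt15Norm]

section uniform

variable {α β : Type*}

theorem uniformCauchySeqOn_of_abs_sub_le {u : ℕ → α → ℝ} {s : Set α} {C : ℕ → ℕ → ℝ}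
    (hC : ∀ ε : ℝ, 0 < ε → ∃ N : ℕ, ∀ m ≥ N, ∀ n ≥ N, C m n < ε)
    (hu : ∀ m n, ∀ x ∈ s, |u m x - u n x| ≤ C m n) : UniformCauchySeqOn u atTop s := by
  intro U hU
  obtain ⟨ε, hε, hεU⟩ := Metric.mem_uniformity_dist.1 hU
  obtain ⟨N, hN⟩ := hC ε hε
  rw [prod_atTop_atTop_eq, eventually_atTop_prod_self']
  exact ⟨N, fun m hm n hn x hx => hεU ((hu m n x hx).trans_lt (hN m hm n hn))⟩

variable [PseudoMetricSpace β] {l : Filter α} {s : Set α} {F : ℕ → α → β} {f : α → β}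

theorem TendstoUniformlyOn.tendsto_of_forall_tendsto [l.NeBot] {L : ℕ → β} {ℓ : β}
    (h : TendstoUniformlyOn F f atTop s) (hs : s ∈ l) (hF : ∀ n, Tendsto (F n) l (𝓝 (L n)))
    (hL : Tendsto L atTop (𝓝 ℓ)) : Tendsto f l (𝓝 ℓ) :=
  ((tendstoUniformlyOn_iff_tendstoUniformlyOnFilter.1 h).mono_right
    (le_principal_iff.2 hs)).tendsto_of_eventually_tendsto (Eventually.of_forall hF) hL

theorem TendstoUniformlyOn.exists_tendsto [CompleteSpace β] [l.NeBot]
    (h : TendstoUniformlyOn F f atTop s) (hs : s ∈ l) (hF : ∀ n, ∃ L, Tendsto (F n) l (𝓝 L)) :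
    ∃ ℓ, Tendsto f l (𝓝 ℓ) := by
  choose L hL using hF
  have hLc : CauchySeq L := by
    refine Metric.cauchySeq_iff.2 fun ε hε => ?_
    have hU := h.uniformCauchySeqOn _ (Metric.dist_mem_uniformity (half_pos hε))
    rw [prod_atTop_atTop_eq, eventually_atTop_prod_self'] at hU
    obtain ⟨N, hN⟩ := hU
    refine ⟨N, fun m hm n hn => (le_of_tendsto ((hL m).dist (hL n)) ?_).trans_lt (half_lt_self hε)⟩
    exact eventually_of_mem hs fun x hx => (hN m hm n hn x hx).le
  obtain ⟨ℓ, hℓ⟩ := cauchySeq_tendsto_of_complete hLc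
  exact ⟨ℓ, h.tendsto_of_forall_tendsto hs hL hℓ⟩

end uniform

theorem tendsto_stmt15Norm_sub_of_tendstoUniformlyOn {ι : Type*} {l : Filter ι} {u : ι → ℝ → ℝ}
    {f : ℝ → ℝ} (hu : ∀ i, ContinuousOn (u i) (Ici 0)) (hf : ContinuousOn f (Ici 0))
    (h : TendstoUniformlyOn u f l (Ici 0))
    (hF : TendstoUniformlyOn (fun i => primitive (u i)) (primitive f) l (Ici 0)) :
    Tendsto (fun i => stmt15Norm (u i - f)) l (𝓝 0) := by
  refine Metric.tendsto_nhds.2 fun ε hε => ?_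
  filter_upwards [Metric.tendstoUniformlyOn_iff.1 h (ε / 3) (by positivity),
    Metric.tendstoUniformlyOn_iff.1 hF (ε / 3) (by positivity)] with i h₁ h₂
  have : stmt15Norm (u i - f) ≤ ε / 3 + ε / 3 := by
    rw [stmt15Norm_eq_supAbs_add]
    refine add_le_add (supAbs_le fun x hx => ?_) (supAbs_le fun x hx => ?_)
    · rw [Pi.sub_apply, abs_sub_comm, ← Real.dist_eq]
      exact (h₁ x hx).le
    · rw [primitive_sub (hu i) hf hx, abs_sub_comm, ← Real.dist_eq]
      exact (h₂ x hx).le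
  rw [Real.dist_0_eq_abs, abs_of_nonneg (stmt15Norm_nonneg _)]
  linarith

theorem exists_tendsto_stmt15Norm_of_cauchy {u : ℕ → ℝ → ℝ} (hu : ∀ n, Stmt15Good (u n))
    (hC : ∀ ε : ℝ, 0 < ε → ∃ N : ℕ, ∀ m ≥ N, ∀ n ≥ N, stmt15Norm (u m - u n) < ε) :
    ∃ f, Stmt15Good f ∧ Tendsto (fun n => stmt15Norm (u n - f)) atTop (𝓝 0) := by
  have hcont n := (hu n).continuousOn
  have hUC : UniformCauchySeqOn u atTop (Ici 0) :=
    uniformCauchySeqOn_of_abs_sub_le hC fun m n x hx =>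
      ((hu m).sub (hu n)).abs_le_stmt15Norm hx
  have hUCF : UniformCauchySeqOn (fun n => primitive (u n)) atTop (Ici 0) :=
    uniformCauchySeqOn_of_abs_sub_le hC fun m n x hx => by
      rw [← primitive_sub (hcont m) (hcont n) hx]
      exact ((hu m).sub (hu n)).abs_primitive_le_stmt15Norm hx
  have hneg : ∀ x < 0, Tendsto (fun n => u n x) atTop (𝓝 0) := fun x hx => by
    simp only [(hu _).eq_zero_of_neg hx, tendsto_const_nhds]
  have hpt : ∀ x, ∃ l, Tendsto (fun n => u n x) atTop (𝓝 l) := fun x => by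
    rcases lt_or_ge x 0 with hx | hx
    · exact ⟨0, hneg x hx⟩
    · exact cauchySeq_tendsto_of_complete (hUC.cauchySeq hx)
  choose f hf using hpt
  have hTU : TendstoUniformlyOn u f atTop (Ici 0) :=
    hUC.tendstoUniformlyOn_of_tendsto fun x _ => hf x
  have hfc : ContinuousOn f (Ici 0) := hTU.continuousOn (Frequently.of_forall hcont)
  have hTUF : TendstoUniformlyOn (fun n => primitive (u n)) (primitive f) atTop (Ici 0) := by
    refine hUCF.tendstoUniformlyOn_of_tendsto fun x hx => ?_
    have hsub : uIcc 0 x ⊆ Ici 0 := by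
      rw [uIcc_of_le hx]
      exact Icc_subset_Ici_self
    exact (hTU.mono hsub).tendsto_intervalIntegral_of_continuousOn
      (Eventually.of_forall fun n => (hcont n).mono hsub)
  have hgood : Stmt15Good f :=
    ⟨fun x hx => tendsto_nhds_unique (hf x) (hneg x hx), hfc,
      hTU.tendsto_of_forall_tendsto (Ici_mem_atTop 0) (fun n => (hu n).tendsto_zero)
        tendsto_const_nhds,
      hTUF.exists_tendsto (Ici_mem_atTop 0) fun n => (hu n).exists_tendsto_primitive⟩
  exact ⟨f, hgood, tendsto_stmt15Norm_sub_of_tendstoUniformlyOn hcont hfc hTU hTUF⟩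

noncomputable def cutoff (b x : ℝ) : ℝ := if x < 0 then 0 else max 0 (min 1 (b + 1 - x))

section cutoff

variable {b x : ℝ}

theorem cutoff_nonneg (b x : ℝ) : 0 ≤ cutoff b x := by
  unfold cutoff; split_ifs <;> simp

theorem cutoff_le_one (b x : ℝ) : cutoff b x ≤ 1 := by
  unfold cutoff; split_ifs <;> simp

theorem cutoff_of_neg (hx : x < 0) : cutoff b x = 0 := if_pos hx

theorem cutoff_of_mem_Icc (hx : x ∈ Icc 0 b) : cutoff b x = 1 := by
  rw [cutoff, if_neg (not_lt.2 hx.1), min_eq_left (by linarith [hx.2]), max_eq_right zero_le_one]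

theorem cutoff_of_le (hx : b + 1 ≤ x) : cutoff b x = 0 := by
  unfold cutoff; split_ifs
  · rfl
  · rw [min_eq_right (by linarith), max_eq_left (by linarith)]

theorem continuousOn_cutoff (b : ℝ) : ContinuousOn (cutoff b) (Ici 0) :=
  (continuous_const.max (continuous_const.min (continuous_const.sub continuous_id))).continuousOn
    |>.congr fun _ hx => if_neg (not_lt.2 hx)

end cutoff

theorem stmt15Good_of_forall_ge_eq_zero {g : ℝ → ℝ} {b : ℝ} (hneg : ∀ x < 0, g x = 0)
    (hc : ContinuousOn g (Ici 0)) (hb : 0 ≤ b) (hz : ∀ x, b ≤ x → g x = 0) : Stmt15Good g :=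
  ⟨hneg, hc, tendsto_const_nhds.congr' (eventually_atTop.2 ⟨b, fun x hx => (hz x hx).symm⟩),
    primitive g b, tendsto_const_nhds.congr' (eventually_atTop.2 ⟨b, fun _ hx =>
      (intervalIntegral_eq_of_forall_ge_eq_zero hc hb hx hz).symm⟩)⟩

theorem stmt15Good_mul_cutoff {g : ℝ → ℝ} {b : ℝ} (hg : ContinuousOn g (Ici 0)) (hb : 0 ≤ b) :
    Stmt15Good (g * cutoff b) :=
  stmt15Good_of_forall_ge_eq_zero (fun x hx => by simp [cutoff_of_neg hx])
    (hg.mul (continuousOn_cutoff b)) (by linarith : (0:ℝ) ≤ b + 1) fun x hx => by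
      simp [cutoff_of_le hx]

theorem abs_mul_cutoff_le (f : ℝ → ℝ) (b x : ℝ) : |(f * cutoff b) x| ≤ |f x| := by
  rw [Pi.mul_apply, abs_mul, abs_of_nonneg (cutoff_nonneg b x)]
  exact mul_le_of_le_one_right (abs_nonneg _) (cutoff_le_one b x)

theorem abs_sub_mul_cutoff_le (f : ℝ → ℝ) (b x : ℝ) : |(f - f * cutoff b) x| ≤ |f x| := by
  have : (f - f * cutoff b) x = f x * (1 - cutoff b x) := by
    simp only [Pi.sub_apply, Pi.mul_apply]; ring
  rw [this, abs_mul, abs_of_nonneg (sub_nonneg.2 (cutoff_le_one b x))]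
  exact mul_le_of_le_one_right (abs_nonneg _) (by linarith [cutoff_nonneg b x])

theorem abs_intervalIntegral_mul_cutoff_le {f : ℝ → ℝ} {b x δ : ℝ} (hf : ContinuousOn f (Ici 0))
    (hb : 0 ≤ b) (hbx : b ≤ x) (hδ : ∀ t, b ≤ t → |f t| ≤ δ) :
    |∫ t in b..x, (f * cutoff b) t| ≤ δ := by
  simpa using abs_intervalIntegral_le_of_forall_ge_eq_zero
    ((hf.mul (continuousOn_cutoff b)).mono (Ici_subset_Ici.2 hb)) (by linarith : b ≤ b + 1) hbx
    (fun t ht => (abs_mul_cutoff_le f b t).trans (hδ t ht.1)) fun t ht => by simp [cutoff_of_le ht]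

theorem primitive_eq_zero_of_eqOn {f : ℝ → ℝ} {y : ℝ} (hy : 0 ≤ y) (hz : EqOn f 0 (Icc 0 y)) :
    primitive f y = 0 := by
  rw [← uIcc_of_le hy] at hz
  simp [primitive, intervalIntegral.integral_congr hz]

theorem stmt15Norm_sub_mul_cutoff_le {f : ℝ → ℝ} {b δ : ℝ} (hf : ContinuousOn f (Ici 0))
    (hb : 0 ≤ b) (h₁ : ∀ x, b ≤ x → |f x| ≤ δ) (h₂ : ∀ x, b ≤ x → |∫ t in b..x, f t| ≤ δ) :
    stmt15Norm (f - f * cutoff b) ≤ δ + 2 * δ := by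
  set h := f - f * cutoff b
  have hδ : 0 ≤ δ := (abs_nonneg _).trans (h₁ b le_rfl)
  have hfc : ContinuousOn (f * cutoff b) (Ici 0) := hf.mul (continuousOn_cutoff b)
  have hzero : ∀ y ≤ b, EqOn h 0 (Icc 0 y) := fun y hyb t ht => by
    simp [h, cutoff_of_mem_Icc (⟨ht.1, ht.2.trans hyb⟩ : t ∈ Icc 0 b)]
  rw [stmt15Norm_eq_supAbs_add]
  refine add_le_add (supAbs_le fun x hx => ?_) (supAbs_le fun x hx => ?_)
  · rcases le_total x b with hxb | hbx
    · rw [hzero x hxb ⟨hx, le_rfl⟩, Pi.zero_apply, abs_zero]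
      exact hδ
    · exact (abs_sub_mul_cutoff_le f b x).trans (h₁ x hbx)
  rcases le_total x b with hxb | hbx
  · rw [primitive_eq_zero_of_eqOn hx (hzero x hxb), abs_zero]
    positivity
  have hsplit : primitive h x = (∫ t in b..x, f t) - ∫ t in b..x, (f * cutoff b) t :=
    calc primitive h x = primitive h x - primitive h b := by
          rw [primitive_eq_zero_of_eqOn hb (hzero b le_rfl), sub_zero]
      _ = ∫ t in b..x, h t := intervalIntegral.integral_interval_sub_left
          ((hf.sub hfc).intervalIntegrable_of_Ici le_rfl hx)
          ((hf.sub hfc).intervalIntegrable_of_Ici le_rfl hb)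
      _ = _ := intervalIntegral.integral_sub (hf.intervalIntegrable_of_Ici hb hx)
          (hfc.intervalIntegrable_of_Ici hb hx)
  rw [hsplit]
  calc |(∫ t in b..x, f t) - ∫ t in b..x, (f * cutoff b) t|
      ≤ |∫ t in b..x, f t| + |∫ t in b..x, (f * cutoff b) t| := abs_sub _ _
    _ ≤ δ + δ := add_le_add (h₂ x hbx) (abs_intervalIntegral_mul_cutoff_le hf hb hbx h₁)
    _ = 2 * δ := by ring

theorem Stmt15Good.eventually_stmt15Norm_sub_mul_cutoff_lt {f : ℝ → ℝ} (hf : Stmt15Good f)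
    {ε : ℝ} (hε : 0 < ε) : ∀ᶠ b in atTop, stmt15Norm (f - f * cutoff b) < ε := by
  obtain ⟨L, hL⟩ := hf.exists_tendsto_primitive
  have h₁ : ∀ᶠ x in atTop, |f x| ≤ ε / 4 :=
    hf.tendsto_zero.abs.eventually_le_const (by rw [abs_zero]; positivity)
  have h₂ : ∀ᶠ x in atTop, |primitive f x - L| ≤ ε / 8 :=
    (hL.sub_const L).abs.eventually_le_const (by rw [sub_self, abs_zero]; positivity)
  obtain ⟨a, ha⟩ := eventually_atTop.1 (h₁.and h₂)
  filter_upwards [eventually_ge_atTop a, eventually_ge_atTop 0] with b hab hb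
  have hcauchy : ∀ x, b ≤ x → |∫ t in b..x, f t| ≤ ε / 4 := fun x hbx => by
    rw [← intervalIntegral.integral_interval_sub_left
      (hf.continuousOn.intervalIntegrable_of_Ici le_rfl (hb.trans hbx))
      (hf.continuousOn.intervalIntegrable_of_Ici le_rfl hb)]
    calc |primitive f x - primitive f b| ≤ |primitive f x - L| + |L - primitive f b| :=
          abs_sub_le _ _ _
      _ ≤ ε / 8 + ε / 8 := add_le_add (ha x (hab.trans hbx)).2 (abs_sub_comm L _ ▸ (ha b hab).2)
      _ = ε / 4 := by ring
  refine (stmt15Norm_sub_mul_cutoff_le hf.continuousOn hb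
    (fun x hx => (ha x (hab.trans hx)).1) hcauchy).trans_lt ?_
  linarith

noncomputable def extendCutoff {b : ℝ} (hb : 0 ≤ b) (d : C(Icc (0:ℝ) (b + 1), ℝ)) : ℝ → ℝ :=
  IccExtend (by linarith) d * cutoff b

theorem stmt15Good_extendCutoff {b : ℝ} (hb : 0 ≤ b) (d : C(Icc (0:ℝ) (b + 1), ℝ)) :
    Stmt15Good (extendCutoff hb d) :=
  stmt15Good_mul_cutoff d.continuous.Icc_extend'.continuousOn hb

theorem exists_stmt15Norm_mul_cutoff_sub_extendCutoff_lt {f : ℝ → ℝ} {b ε : ℝ}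
    (hf : ContinuousOn f (Ici 0)) (hb : 0 ≤ b) {S : Set C(Icc (0:ℝ) (b + 1), ℝ)} (hS : Dense S)
    (hε : 0 < ε) : ∃ d ∈ S, stmt15Norm (f * cutoff b - extendCutoff hb d) < ε := by
  set η := ε / (b + 3)
  have hη : 0 < η := by positivity
  let fb : C(Icc (0:ℝ) (b + 1), ℝ) :=
    ⟨fun x => f x, (hf.mono Icc_subset_Ici_self).domRestrict⟩
  obtain ⟨d, hdS, hd⟩ := hS.exists_dist_lt fb hη
  have hc : ContinuousOn (f * cutoff b - extendCutoff hb d) (Ici 0) :=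
    (hf.mul (continuousOn_cutoff b)).sub (stmt15Good_extendCutoff hb d).continuousOn
  have happrox : stmt15Norm (f * cutoff b - extendCutoff hb d) ≤ η + η * (b + 1) := by
    refine stmt15Norm_le_of_forall_ge_eq_zero hc (by positivity) (fun t ht => ?_)
      fun t ht => by simp [extendCutoff, cutoff_of_le ht]
    calc |(f * cutoff b - extendCutoff hb d) t| = |f t - d ⟨t, ht⟩| * cutoff b t := by
          simp [extendCutoff, IccExtend_of_mem _ d ht, ← sub_mul, abs_mul,
            abs_of_nonneg (cutoff_nonneg _ _)]
      _ ≤ |f t - d ⟨t, ht⟩| := mul_le_of_le_one_right (abs_nonneg _) (cutoff_le_one _ _)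
      _ ≤ dist fb d := ContinuousMap.dist_apply_le_dist (f := fb) (g := d) ⟨t, ht⟩
      _ ≤ η := hd.le
  have : η * (b + 3) = ε := div_mul_cancel₀ _ (by positivity)
  exact ⟨d, hdS, happrox.trans_lt (by linarith)⟩

theorem exists_countable_dense_stmt15Good :
    ∃ D : Set (ℝ → ℝ), D.Countable ∧ (∀ g ∈ D, Stmt15Good g) ∧
      ∀ f, Stmt15Good f → ∀ ε : ℝ, 0 < ε → ∃ g ∈ D, stmt15Norm (f - g) < ε := by
  choose S hSc hSd using fun n : ℕ =>
    TopologicalSpace.exists_countable_dense C(Icc (0:ℝ) (n + 1), ℝ)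
  refine ⟨⋃ n : ℕ, extendCutoff n.cast_nonneg '' S n, countable_iUnion fun n => (hSc n).image _,
    ?_, fun f hf ε hε => ?_⟩
  · simp only [mem_iUnion, mem_image]
    rintro _ ⟨n, d, -, rfl⟩
    exact stmt15Good_extendCutoff _ d
  obtain ⟨n, hn⟩ := (tendsto_natCast_atTop_atTop.eventually
    (hf.eventually_stmt15Norm_sub_mul_cutoff_lt (half_pos hε))).exists
  obtain ⟨d, hdS, hd⟩ := exists_stmt15Norm_mul_cutoff_sub_extendCutoff_lt hf.continuousOn
    n.cast_nonneg (hSd n) (half_pos hε)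
  have hfc := stmt15Good_mul_cutoff hf.continuousOn n.cast_nonneg
  refine ⟨_, mem_iUnion.2 ⟨n, d, hdS, rfl⟩, ?_⟩
  calc stmt15Norm (f - extendCutoff _ d)
      = stmt15Norm ((f - f * cutoff n) + (f * cutoff n - extendCutoff _ d)) := by
        rw [sub_add_sub_cancel]
    _ ≤ stmt15Norm (f - f * cutoff n) + stmt15Norm (f * cutoff n - extendCutoff _ d) :=
        stmt15Norm_add_le (hf.sub hfc) (hfc.sub (stmt15Good_extendCutoff _ d))
    _ < ε / 2 + ε / 2 := add_lt_add hn hd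
    _ = ε := add_halves ε

theorem stmt15 :
    ∃ V : Submodule ℝ (ℝ → ℝ), (V : Set (ℝ → ℝ)) = {f | Stmt15Good f} ∧
      (∀ f, 0 ≤ stmt15Norm f) ∧
      (∀ f g, f ∈ V → g ∈ V → stmt15Norm (f + g) ≤ stmt15Norm f + stmt15Norm g) ∧
      (∀ (c : ℝ) (f : ℝ → ℝ), f ∈ V → stmt15Norm (c • f) = |c| * stmt15Norm f) ∧
      (∀ f ∈ V, (stmt15Norm f = 0 ↔ f = 0)) ∧
      (∀ u : ℕ → ℝ → ℝ, (∀ n, u n ∈ V) →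
        (∀ ε : ℝ, 0 < ε → ∃ N₀ : ℕ, ∀ m ≥ N₀, ∀ n ≥ N₀, stmt15Norm (u m - u n) < ε) →
        ∃ f ∈ V, Tendsto (fun n => stmt15Norm (u n - f)) atTop (nhds 0)) ∧
      (∃ D : Set (ℝ → ℝ), D.Countable ∧ D ⊆ (V : Set (ℝ → ℝ)) ∧
        ∀ f ∈ V, ∀ ε : ℝ, 0 < ε → ∃ g ∈ D, stmt15Norm (f - g) < ε) ∧
      (∀ f ∈ V, ∀ ε : ℝ, 0 < ε → ∃ g ∈ V,
        (∃ a : ℝ, ∀ x > a, g x = 0) ∧ stmt15Norm (f - g) < ε) := by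
  refine ⟨stmt15Submodule, rfl, stmt15Norm_nonneg, fun f g => stmt15Norm_add_le,
    fun c f _ => stmt15Norm_smul c f, fun f => stmt15Norm_eq_zero_iff,
    fun u => exists_tendsto_stmt15Norm_of_cauchy, exists_countable_dense_stmt15Good,
    fun f hf ε hε => ?_⟩
  obtain ⟨b, hb, hb0⟩ :=
    ((hf.eventually_stmt15Norm_sub_mul_cutoff_lt hε).and (eventually_ge_atTop 0)).exists
  exact ⟨f * cutoff b, stmt15Good_mul_cutoff hf.continuousOn hb0,
    ⟨b + 1, fun x hx => by simp [cutoff_of_le hx.le]⟩, hb⟩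
end

section
/- Consider the Banach space CBL_s of sequences (f_k) of continuous, bounded, Lebesgue-integrable functions ℝ → ℝ with ‖f_k‖_∞ → 0 and sup_k ‖f_k‖₁ < ∞, normed by ‖(f_k)‖ = sup_k ‖f_k‖_∞ + sup_k ‖f_k‖₁. Then the set 𝓕 = {(f_k) ∈ CBL_s : ‖f_k‖₁ ↛ 0} of sequences failing the dominated convergence conclusion is spaceable in CBL_s: it contains, together with 0, an infinite-dimensional closed vector subspace. -/
/-!
A continuous, bounded, integrable `f` generates the sequence of `L¹`-normalised dilations
`f_k(x) = f (x / (k + 1)) / (k + 1)`, for which `‖f_k‖₁ = ‖f‖₁` while `‖f_k‖_∞ = ‖f‖_∞ / (k + 1)`.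
These sequences form a linear subspace of `CBL_s` on which `‖f_k‖₁` is constant, so it tends to `0`
only when `f = 0`. Dilations of bumps with disjoint supports are linearly independent, and the
subspace is closed because the relation `u_k(x) = u_0(x / (k + 1)) / (k + 1)` passes to limits
in the sup-norm part of the `CBL_s` norm.
-/

open MeasureTheory Filter

/-- Membership in the space `CBL_s`: sequences of continuous, bounded, integrable
functions `ℝ → ℝ` with `‖f_k‖_∞ → 0` and `sup_k ‖f_k‖₁ < ∞`. -/
def IsCBLs (u : ℕ → ℝ → ℝ) : Prop :=
  (∀ k, Continuous (u k)) ∧ (∀ k, ∃ M : ℝ, ∀ x, |u k x| ≤ M) ∧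
  (∀ k, Integrable (u k)) ∧
  Tendsto (fun k => ⨆ x : ℝ, |u k x|) atTop (nhds 0) ∧
  ∃ M : ℝ, ∀ k, (∫ x, |u k x|) ≤ M

/-- The norm `‖(f_k)‖ = sup_k ‖f_k‖_∞ + sup_k ‖f_k‖₁` on `CBL_s`. -/
noncomputable def cblNorm (u : ℕ → ℝ → ℝ) : ℝ :=
  (⨆ k, ⨆ x : ℝ, |u k x|) + ⨆ k, ∫ x, |u k x|

theorem Continuous.eq_zero_of_integral_abs_eq_zero {X : Type*} [TopologicalSpace X]
    [MeasurableSpace X] [OpensMeasurableSpace X] {μ : Measure X} [μ.IsOpenPosMeasure] {f : X → ℝ}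
    (hc : Continuous f) (hi : Integrable f μ) (h : ∫ x, |f x| ∂μ = 0) : f = 0 := by
  have hae : (fun x => |f x|) =ᵐ[μ] 0 :=
    (integral_eq_zero_iff_of_nonneg (fun x => abs_nonneg _) hi.abs).1 h
  refine (hc.ae_eq_iff_eq μ continuous_const).1 ?_
  filter_upwards [hae] with x hx
  exact abs_eq_zero.1 hx

theorem integral_abs_comp_div_div (f : ℝ → ℝ) {c : ℝ} (hc : 0 < c) :
    ∫ x, |f (x / c) / c| = ∫ x, |f x| := by
  simp_rw [abs_div, abs_of_pos hc]
  rw [integral_div, Measure.integral_comp_div (fun y => |f y|), abs_of_pos hc, smul_eq_mul]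
  field_simp

theorem IsCBLs.exists_abs_le {u : ℕ → ℝ → ℝ} (hu : IsCBLs u) : ∃ D, ∀ k x, |u k x| ≤ D := by
  obtain ⟨-, hbdd, -, hsup, -⟩ := hu
  obtain ⟨D, hD⟩ := hsup.bddAbove_range
  refine ⟨D, fun k x => ?_⟩
  obtain ⟨C, hC⟩ := hbdd k
  exact (le_ciSup ⟨C, Set.forall_mem_range.2 hC⟩ x).trans (hD ⟨k, rfl⟩)

-- Without a uniform bound the suprema in `cblNorm` could take the junk value `0`.
theorem abs_le_cblNorm {w : ℕ → ℝ → ℝ} {D : ℝ} (hD : ∀ k x, |w k x| ≤ D) (k : ℕ) (x : ℝ) :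
    |w k x| ≤ cblNorm w := by
  have hD0 : 0 ≤ D := (abs_nonneg _).trans (hD 0 0)
  have hsup : ∀ j, ⨆ y, |w j y| ≤ D := fun j => Real.iSup_le (hD j) hD0
  have hL1 : 0 ≤ ⨆ j, ∫ y, |w j y| :=
    Real.iSup_nonneg fun j => integral_nonneg fun y => abs_nonneg _
  calc |w k x| ≤ ⨆ y, |w k y| := le_ciSup ⟨D, Set.forall_mem_range.2 (hD k)⟩ x
    _ ≤ ⨆ j, ⨆ y, |w j y| := le_ciSup ⟨D, Set.forall_mem_range.2 hsup⟩ k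
    _ ≤ cblNorm w := le_add_of_nonneg_right hL1

noncomputable def continuousBoundedIntegrable : Submodule ℝ (ℝ → ℝ) where
  carrier := {f | Continuous f ∧ (∃ C, ∀ x, |f x| ≤ C) ∧ Integrable f}
  zero_mem' := ⟨continuous_const, ⟨0, by simp⟩, integrable_zero _ _ _⟩
  add_mem' := by
    rintro f g ⟨hfc, ⟨C, hC⟩, hfi⟩ ⟨hgc, ⟨C', hC'⟩, hgi⟩
    exact ⟨hfc.add hgc, ⟨C + C', fun x => (abs_add_le _ _).trans (add_le_add (hC x) (hC' x))⟩,
      hfi.add hgi⟩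
  smul_mem' := by
    rintro c f ⟨hfc, ⟨C, hC⟩, hfi⟩
    refine ⟨hfc.const_smul c, ⟨|c| * C, fun x => ?_⟩, hfi.smul c⟩
    simpa [abs_mul] using mul_le_mul_of_nonneg_left (hC x) (abs_nonneg c)

noncomputable def dilationSeq : (ℝ → ℝ) →ₗ[ℝ] (ℕ → ℝ → ℝ) where
  toFun f k x := f (x / (k + 1)) / (k + 1)
  map_add' f g := by ext k x; simp [add_div]
  map_smul' c f := by ext k x; simp [mul_div_assoc]

theorem dilationSeq_apply (f : ℝ → ℝ) (k : ℕ) (x : ℝ) :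
    dilationSeq f k x = f (x / (k + 1)) / (k + 1) := rfl

@[simp]
theorem dilationSeq_zero (f : ℝ → ℝ) : dilationSeq f 0 = f := by
  ext x; simp [dilationSeq_apply]

theorem dilationSeq_injective : Function.Injective dilationSeq :=
  Function.LeftInverse.injective (g := fun u : ℕ → ℝ → ℝ => u 0) fun f => dilationSeq_zero f

theorem integral_abs_dilationSeq (f : ℝ → ℝ) (k : ℕ) :
    ∫ x, |dilationSeq f k x| = ∫ x, |f x| :=
  integral_abs_comp_div_div f (by positivity)

theorem abs_dilationSeq_le {f : ℝ → ℝ} {C : ℝ} (hC : ∀ x, |f x| ≤ C) (k : ℕ) (x : ℝ) :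
    |dilationSeq f k x| ≤ C / (k + 1) := by
  rw [dilationSeq_apply, abs_div, abs_of_pos (a := (k : ℝ) + 1) k.cast_add_one_pos]
  gcongr
  exact hC _

theorem abs_sub_dilationSeq_le_two_mul_cblNorm {w : ℕ → ℝ → ℝ} {D : ℝ}
    (hD : ∀ k x, |w k x| ≤ D) (k : ℕ) (x : ℝ) :
    |w k x - dilationSeq (w 0) k x| ≤ 2 * cblNorm w := by
  have hw := abs_le_cblNorm hD
  have h0 : 0 ≤ cblNorm w := (abs_nonneg _).trans (hw 0 0)
  have hdiv : cblNorm w / (k + 1) ≤ cblNorm w := div_le_self h0 (by simp)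
  calc |w k x - dilationSeq (w 0) k x| ≤ |w k x| + |dilationSeq (w 0) k x| := abs_sub _ _
    _ ≤ cblNorm w + cblNorm w / (k + 1) := add_le_add (hw k x) (abs_dilationSeq_le (hw 0) k x)
    _ ≤ 2 * cblNorm w := by linarith

theorem isCBLs_dilationSeq {f : ℝ → ℝ} (hf : f ∈ continuousBoundedIntegrable) :
    IsCBLs (dilationSeq f) := by
  obtain ⟨hc, ⟨C, hC⟩, hi⟩ := hf
  have hC0 : 0 ≤ C := (abs_nonneg _).trans (hC 0)
  refine ⟨fun k => ?_, fun k => ⟨_, abs_dilationSeq_le hC k⟩, fun k => ?_, ?_,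
    ⟨∫ x, |f x|, fun k => (integral_abs_dilationSeq f k).le⟩⟩
  · exact (hc.comp (continuous_id.div_const _)).div_const _
  · exact ((integrable_comp_div_iff f (by positivity)).2 hi).div_const _
  · have hle : ∀ k : ℕ, ⨆ x, |dilationSeq f k x| ≤ C / (k + 1) := fun k =>
      Real.iSup_le (abs_dilationSeq_le hC k) (by positivity)
    have hlim : Tendsto (fun k : ℕ => C / ((k : ℝ) + 1)) atTop (nhds 0) := by
      simpa [div_eq_mul_inv] using tendsto_one_div_add_atTop_nhds_zero_nat.const_mul C
    exact squeeze_zero (fun k => Real.iSup_nonneg fun x => abs_nonneg _) hle hlim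

noncomputable def dilationSubspace : Submodule ℝ (ℕ → ℝ → ℝ) :=
  continuousBoundedIntegrable.map dilationSeq

theorem mem_dilationSubspace_iff {u : ℕ → ℝ → ℝ} :
    u ∈ dilationSubspace ↔ u 0 ∈ continuousBoundedIntegrable ∧ u = dilationSeq (u 0) := by
  constructor
  · rintro ⟨f, hf, rfl⟩
    simpa using hf
  · rintro ⟨h0, hu⟩
    exact ⟨u 0, h0, hu.symm⟩

theorem isCBLs_of_mem_dilationSubspace {u : ℕ → ℝ → ℝ} (hu : u ∈ dilationSubspace) :
    IsCBLs u := by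
  obtain ⟨f, hf, rfl⟩ := hu
  exact isCBLs_dilationSeq hf

theorem not_tendsto_integral_abs_of_mem_dilationSubspace {u : ℕ → ℝ → ℝ}
    (hu : u ∈ dilationSubspace) (hne : u ≠ 0) :
    ¬ Tendsto (fun k => ∫ x, |u k x|) atTop (nhds 0) := by
  obtain ⟨f, ⟨hc, -, hi⟩, rfl⟩ := hu
  intro hlim
  simp only [integral_abs_dilationSeq] at hlim
  have hf : f = 0 := hc.eq_zero_of_integral_abs_eq_zero hi (tendsto_const_nhds_iff.1 hlim)
  exact hne (by simp [hf])

noncomputable def unitBump (n : ℕ) : ContDiffBump (n : ℝ) :=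
  ⟨1 / 4, 1 / 2, by norm_num, by norm_num⟩

theorem unitBump_natCast (n m : ℕ) : unitBump n m = (Pi.single n 1 : ℕ → ℝ) m := by
  rcases eq_or_ne m n with rfl | hmn
  · simpa using (unitBump m).one_of_mem_closedBall (by simp [unitBump])
  · rw [Pi.single_eq_of_ne hmn]
    refine (unitBump n).zero_of_le_dist ?_
    have h : (1 : ℤ) ≤ |(m : ℤ) - n| := Int.one_le_abs (sub_ne_zero.2 (by exact_mod_cast hmn))
    have : (1 : ℝ) ≤ |(m : ℝ) - n| := by exact_mod_cast h
    simp only [unitBump, Real.dist_eq]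
    linarith

theorem unitBump_mem (n : ℕ) : ⇑(unitBump n) ∈ continuousBoundedIntegrable :=
  ⟨(unitBump n).continuous,
    ⟨1, fun x => by rw [abs_of_nonneg (unitBump n).nonneg]; exact (unitBump n).le_one⟩,
    (unitBump n).integrable⟩

theorem linearIndependent_unitBump : LinearIndependent ℝ fun n => ⇑(unitBump n) := by
  let eval : (ℝ → ℝ) →ₗ[ℝ] (ℕ → ℝ) := LinearMap.pi fun m : ℕ => LinearMap.proj (m : ℝ)
  refine .of_comp eval ?_
  convert Pi.linearIndependent_single_one ℕ ℝ with n
  ext m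
  exact unitBump_natCast n m

theorem aleph0_le_rank_dilationSubspace : Cardinal.aleph0 ≤ Module.rank ℝ dilationSubspace := by
  let e : ℕ → dilationSubspace := fun n =>
    ⟨dilationSeq (unitBump n), Submodule.mem_map_of_mem (unitBump_mem n)⟩
  have he : LinearIndependent ℝ e :=
    .of_comp dilationSubspace.subtype <| linearIndependent_unitBump.map' dilationSeq
      (LinearMap.ker_eq_bot_of_injective dilationSeq_injective)
  simpa using he.aleph0_le_rank

theorem mem_dilationSubspace_of_approx {u : ℕ → ℝ → ℝ} (hu : IsCBLs u)
    (happ : ∀ ε : ℝ, 0 < ε → ∃ v ∈ dilationSubspace, cblNorm (u - v) < ε) :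
    u ∈ dilationSubspace := by
  refine mem_dilationSubspace_iff.2 ⟨⟨hu.1 0, hu.2.1 0, hu.2.2.1 0⟩, ?_⟩
  ext k x
  refine eq_of_forall_dist_le fun ε hε => ?_
  obtain ⟨v, hv, huv⟩ := happ (ε / 2) (half_pos hε)
  obtain ⟨D, hD⟩ := hu.exists_abs_le
  obtain ⟨D', hD'⟩ := (isCBLs_of_mem_dilationSubspace hv).exists_abs_le
  have hvk : v k x = dilationSeq (v 0) k x := by rw [← (mem_dilationSubspace_iff.1 hv).2]
  have hdiff : u k x - dilationSeq (u 0) k x = (u - v) k x - dilationSeq ((u - v) 0) k x := by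
    simp only [Pi.sub_apply, map_sub, hvk]
    ring
  have hbound : ∀ j y, |(u - v) j y| ≤ D + D' := fun j y =>
    (abs_sub _ _).trans (add_le_add (hD j y) (hD' j y))
  rw [Real.dist_eq, hdiff]
  linarith [abs_sub_dilationSeq_le_two_mul_cblNorm hbound k x]

theorem stmt17 :
    ∃ M : Submodule ℝ (ℕ → ℝ → ℝ),
      (∀ u ∈ M, IsCBLs u) ∧
      (∀ u ∈ M, u ≠ 0 → ¬ Tendsto (fun k => ∫ x, |u k x|) atTop (nhds 0)) ∧
      Cardinal.aleph0 ≤ Module.rank ℝ M ∧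
      (∀ u : ℕ → ℝ → ℝ, IsCBLs u →
        (∀ ε : ℝ, 0 < ε → ∃ v ∈ M, cblNorm (u - v) < ε) → u ∈ M) :=
  ⟨dilationSubspace, fun _ => isCBLs_of_mem_dilationSubspace,
    fun _ => not_tendsto_integral_abs_of_mem_dilationSubspace, aleph0_le_rank_dilationSubspace,
    fun _ => mem_dilationSubspace_of_approx⟩
end
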